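/- Let M be a smooth manifold, Θ a smooth (n+1)-form on M, Ω = −dΘ, and ξ a vector field on M such that £_ξ Θ = 0 (ξ is a symmetry). If φ : N → M is a smooth map from an n+1 dimensional manifold such that φ*(ι_X Ω) = 0 for every vector field X on M (φ is a solution of the field equations), then φ*(d(ι_ξ Θ)) = 0, i.e. ι_ξ Θ is a preserved quantity. -/
import Mathlib

/-- Noether's theorem in the multisymplectic setting: if `£_ξ Θ = 0` (ξ is a symmetry of the
Poincaré–Cartan form), `Ω = −dΘ`, and `φ` is a solution of the field equations, i.e.
`φ*(ι_X Ω) = 0` for every vector field `X`, then `φ*(d(ι_ξ Θ)) = 0`: the `n`-form `ι_ξ Θ`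
is a preserved quantity. Forms on `M` and `N` are abstracted as modules `ΛM`, `ΛN`, the
pullback `φ*` as a linear map commuting with the exterior derivatives, and Cartan's magic
formula is assumed. -/
theorem stmt5 {ΛM ΛN : Type*} [AddCommGroup ΛM] [Module ℝ ΛM] [AddCommGroup ΛN] [Module ℝ ΛN]
    {L : Type*}
    (dM : ΛM →ₗ[ℝ] ΛM) (dN : ΛN →ₗ[ℝ] ΛN) (iota lie : L → ΛM →ₗ[ℝ] ΛM)
    (pull : ΛM →ₗ[ℝ] ΛN)
    (hpull : ∀ ω : ΛM, pull (dM ω) = dN (pull ω))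
    (hcartan : ∀ (X : L) (ω : ΛM), lie X ω = dM (iota X ω) + iota X (dM ω))
    (Θ Ω : ΛM) (hΩ : Ω = -dM Θ) (ξ : L)
    (hsym : lie ξ Θ = 0)
    (hsol : ∀ X : L, pull (iota X Ω) = 0) :
    pull (dM (iota ξ Θ)) = 0 := by
  have h := hcartan ξ Θ
  rw [hsym] at h
  have hd : dM (iota ξ Θ) = iota ξ Ω := by
    rw [hΩ, map_neg]
    exact eq_neg_of_add_eq_zero_left h.symm
  rw [hd, hsol]
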